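/- arXiv:2311.03036 — 2 statements merged into one kernel-verified Lean document; each statement's English description precedes it below -/
import Mathlib

section
/- For every operator monotone index function φ : [0,a] → ℝ⁺ there exists a constant 1 ≤ C < ∞ such that for all s, t with 0 < s ≤ t ≤ a it holds φ(t)/t ≤ C φ(s)/s. -/
/-!
Operator monotonicity is only tested on operators with two eigenvalues. On `ℝ²`, let `P` project
onto the unit vector `u = (√θ, √(1 - θ))` and `Q` onto `e₀`. By a weighted Cauchy–Schwarz
inequality, `t • P ≤ s • Q + b • (1 - Q)` once `t θ / s + t (1 - θ) / b = 1`, and testing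
`φ(t • P) ≤ φ(s • Q + b • (1 - Q))` at `e₀` gives `φ(t) θ ≤ φ(s)`. With `θ` solved from that
equation, this says that `t ↦ φ(t) (b - t) / t` is non-increasing on `(0, b)`. For `b = a` it gives
the bound with `C = 2` as long as `t ≤ a / 2`. For `t > a / 2` one compares `φ(t) / t ≤ 2 φ(a) / a`
with `φ(s) / s ≥ φ(a / 2) / a`; here `φ(a / 2) > 0` unless `φ` vanishes on `[0, a)`, hence, by
continuity, at `a` too.
-/

set_option synthInstance.maxHeartbeats 1000000
set_option maxHeartbeats 1000000

open scoped RealInnerProductSpace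

noncomputable section

/-- `Φ` is the operator `φ(A)` given by the continuous functional calculus for a
(positive, self-adjoint) operator `A` with spectrum contained in `[0,a]`: `Φ` is a limit
of `q(A)` along polynomials `q` approximating `φ` uniformly on `[0,a]`. -/
def IsFunctionalCalcOn (a : ℝ) (φ : ℝ → ℝ) {H : Type*} [NormedAddCommGroup H]
    [InnerProductSpace ℝ H] [CompleteSpace H] (A Φ : H →L[ℝ] H) : Prop :=
  ∀ ε : ℝ, 0 < ε → ∃ q : Polynomial ℝ,
    (∀ t ∈ Set.Icc (0 : ℝ) a, |φ t - q.eval t| ≤ ε) ∧ ‖Φ - Polynomial.aeval A q‖ ≤ ε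

open Polynomial InnerProductSpace

section TwoLevel

variable {R A : Type*} [CommRing R] [Ring A] [Algebra R A]

def twoLevel (p : A) (α β : R) : A := α • p + β • (1 - p)

theorem twoLevel_add_twoLevel (p : A) (α β α' β' : R) :
    twoLevel p α β + twoLevel p α' β' = twoLevel p (α + α') (β + β') := by
  simp only [twoLevel, add_smul]; abel

theorem twoLevel_sub_twoLevel (p : A) (α β α' β' : R) :
    twoLevel p α β - twoLevel p α' β' = twoLevel p (α - α') (β - β') := by
  simp only [twoLevel, sub_smul]; abel

theorem IsIdempotentElem.twoLevel_mul_twoLevel {p : A} (hp : IsIdempotentElem p) (α β γ δ : R) :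
    twoLevel p α β * twoLevel p γ δ = twoLevel p (α * γ) (β * δ) := by
  have h₁ : p * (1 - p) = 0 := by rw [mul_sub, mul_one, hp.eq, sub_self]
  have h₂ : (1 - p) * p = 0 := by rw [sub_mul, one_mul, hp.eq, sub_self]
  simp only [twoLevel, add_mul, mul_add, smul_mul_smul_comm, hp.eq, hp.one_sub.eq, h₁, h₂,
    smul_zero, add_zero, zero_add]

theorem IsIdempotentElem.aeval_twoLevel {p : A} (hp : IsIdempotentElem p) (α β : R) (q : R[X]) :
    aeval (twoLevel p α β) q = twoLevel p (q.eval α) (q.eval β) := by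
  induction q using Polynomial.induction_on with
  | C c => simp [twoLevel, Algebra.algebraMap_eq_smul_one, ← smul_add]
  | add q r hq hr => rw [map_add, hq, hr, twoLevel_add_twoLevel, eval_add, eval_add]
  | monomial n c ih =>
    rw [pow_succ, ← mul_assoc, map_mul, ih, aeval_X, hp.twoLevel_mul_twoLevel]
    simp only [eval_mul, eval_X]

end TwoLevel

section Operator

variable {H : Type*} [NormedAddCommGroup H] [InnerProductSpace ℝ H]

theorem inner_twoLevel_apply_self (p : H →L[ℝ] H) (α β : ℝ) (x : H) :
    ⟪twoLevel p α β x, x⟫ = α * ⟪p x, x⟫ + β * (‖x‖ ^ 2 - ⟪p x, x⟫) := by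
  simp [twoLevel, inner_add_left, inner_sub_left, real_inner_smul_left]

theorem inner_rankOne_self_apply_self (u x : H) : ⟪rankOne ℝ u u x, x⟫ = ⟪u, x⟫ ^ 2 := by
  rw [rankOne_apply, real_inner_smul_left, sq]

variable [CompleteSpace H] {p : H →L[ℝ] H}

theorem IsStarProjection.inner_apply_self (hp : IsStarProjection p) (x : H) :
    ⟪p x, x⟫ = ‖p x‖ ^ 2 := by
  calc ⟪p x, x⟫ = ⟪p (p x), x⟫ := by
        rw [← ContinuousLinearMap.comp_apply, ← ContinuousLinearMap.mul_def, hp.isIdempotentElem.eq]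
    _ = ‖p x‖ ^ 2 := (hp.isSelfAdjoint.isSymmetric (p x) x).trans (real_inner_self_eq_norm_sq _)

theorem IsStarProjection.isPositive_twoLevel (hp : IsStarProjection p) {α β : ℝ} (hα : 0 ≤ α)
    (hβ : 0 ≤ β) : (twoLevel p α β).IsPositive :=
  ((ContinuousLinearMap.IsPositive.of_isStarProjection hp).smul_of_nonneg hα).add
    ((ContinuousLinearMap.IsPositive.of_isStarProjection hp.one_sub).smul_of_nonneg hβ)

theorem IsStarProjection.norm_twoLevel_le (hp : IsStarProjection p) {α β m : ℝ} (hα : |α| ≤ m)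
    (hβ : |β| ≤ m) : ‖twoLevel p α β‖ ≤ m := by
  have hm : 0 ≤ m := (abs_nonneg α).trans hα
  refine ContinuousLinearMap.opNorm_le_bound _ hm fun x => ?_
  have hpx : ‖p x‖ ≤ ‖x‖ := (p.le_opNorm x).trans (mul_le_of_le_one_left (norm_nonneg x) hp.norm_le)
  have happly : twoLevel p α β x = β • x + (α - β) • p x := by
    simp only [twoLevel, add_apply, smul_apply, sub_apply, one_apply_eq_self, smul_sub, sub_smul]
    abel
  have hsq : ‖twoLevel p α β x‖ ^ 2 = β ^ 2 * ‖x‖ ^ 2 + (α ^ 2 - β ^ 2) * ‖p x‖ ^ 2 := by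
    rw [happly, norm_add_sq_real, real_inner_smul_left, real_inner_smul_right,
      real_inner_comm, hp.inner_apply_self, norm_smul, norm_smul, Real.norm_eq_abs,
      Real.norm_eq_abs, mul_pow, mul_pow, sq_abs, sq_abs]
    ring
  have hα2 : α ^ 2 ≤ m ^ 2 := sq_le_sq' (abs_le.mp hα).1 (abs_le.mp hα).2
  have hβ2 : β ^ 2 ≤ m ^ 2 := sq_le_sq' (abs_le.mp hβ).1 (abs_le.mp hβ).2
  have hpx2 : ‖p x‖ ^ 2 ≤ ‖x‖ ^ 2 := pow_le_pow_left₀ (norm_nonneg _) hpx 2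
  refine (sq_le_sq₀ (norm_nonneg _) (by positivity)).mp ?_
  rw [hsq, mul_pow]
  nlinarith [sq_nonneg ‖p x‖]

theorem IsStarProjection.isFunctionalCalcOn_twoLevel (hp : IsStarProjection p) {a : ℝ}
    {φ : ℝ → ℝ} (hφ : ContinuousOn φ (Set.Icc 0 a)) {α β : ℝ} (hα : α ∈ Set.Icc 0 a)
    (hβ : β ∈ Set.Icc 0 a) :
    IsFunctionalCalcOn a φ (twoLevel p α β) (twoLevel p (φ α) (φ β)) := by
  intro ε hε
  obtain ⟨q, hq⟩ := exists_polynomial_near_of_continuousOn 0 a φ hφ ε hε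
  have hq' : ∀ t ∈ Set.Icc 0 a, |φ t - q.eval t| ≤ ε := fun t ht => by
    rw [abs_sub_comm]; exact (hq t ht).le
  refine ⟨q, hq', ?_⟩
  rw [hp.isIdempotentElem.aeval_twoLevel, twoLevel_sub_twoLevel]
  exact hp.norm_twoLevel_le (hq' α hα) (hq' β hβ)

end Operator

def IsOperatorMonotoneOn (a : ℝ) (φ : ℝ → ℝ) : Prop :=
  ∀ (H : Type) [NormedAddCommGroup H] [InnerProductSpace ℝ H] [CompleteSpace H]
    (A B ΦA ΦB : H →L[ℝ] H), A.IsPositive → B.IsPositive → ‖A‖ ≤ a → ‖B‖ ≤ a →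
    IsFunctionalCalcOn a φ A ΦA → IsFunctionalCalcOn a φ B ΦB →
    (∀ x, ⟪A x, x⟫ ≤ ⟪B x, x⟫) → ∀ x, ⟪ΦA x, x⟫ ≤ ⟪ΦB x, x⟫

theorem IsOperatorMonotoneOn.inner_twoLevel_le {a : ℝ} {φ : ℝ → ℝ} (hφ : IsOperatorMonotoneOn a φ)
    (hcont : ContinuousOn φ (Set.Icc 0 a)) {H : Type} [NormedAddCommGroup H]
    [InnerProductSpace ℝ H] [CompleteSpace H] {p q : H →L[ℝ] H} (hp : IsStarProjection p)
    (hq : IsStarProjection q) {α β γ δ : ℝ} (hα : α ∈ Set.Icc 0 a) (hβ : β ∈ Set.Icc 0 a)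
    (hγ : γ ∈ Set.Icc 0 a) (hδ : δ ∈ Set.Icc 0 a)
    (hle : ∀ x, ⟪twoLevel p α β x, x⟫ ≤ ⟪twoLevel q γ δ x, x⟫) (x : H) :
    ⟪twoLevel p (φ α) (φ β) x, x⟫ ≤ ⟪twoLevel q (φ γ) (φ δ) x, x⟫ := by
  have habs : ∀ {r : ℝ}, r ∈ Set.Icc 0 a → |r| ≤ a := fun hr => (abs_of_nonneg hr.1).trans_le hr.2
  exact hφ H _ _ _ _ (hp.isPositive_twoLevel hα.1 hβ.1) (hq.isPositive_twoLevel hγ.1 hδ.1)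
    (hp.norm_twoLevel_le (habs hα) (habs hβ)) (hq.norm_twoLevel_le (habs hγ) (habs hδ))
    (hp.isFunctionalCalcOn_twoLevel hcont hα hβ) (hq.isFunctionalCalcOn_twoLevel hcont hγ hδ) hle x

theorem mul_add_mul_sq_le {s b t c d x y : ℝ} (hs : 0 < s) (hb : 0 < b) (ht : 0 ≤ t)
    (h : t * c ^ 2 * b + t * d ^ 2 * s = s * b) :
    t * (c * x + d * y) ^ 2 ≤ s * x ^ 2 + b * y ^ 2 := by
  have hsb : s * b * (s * x ^ 2 + b * y ^ 2 - t * (c * x + d * y) ^ 2)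
      = t * (c * b * y - d * s * x) ^ 2 := by
    linear_combination (-(s * x ^ 2 + b * y ^ 2)) * h
  have := mul_nonneg ht (sq_nonneg (c * b * y - d * s * x))
  rw [← hsb] at this
  exact sub_nonneg.mp ((mul_nonneg_iff_of_pos_left (mul_pos hs hb)).mp this)

theorem IsOperatorMonotoneOn.antitoneOn_mul_sub_div {a b : ℝ} {φ : ℝ → ℝ}
    (hφ : IsOperatorMonotoneOn a φ) (hcont : ContinuousOn φ (Set.Icc 0 a)) (hφ0 : 0 ≤ φ 0)
    (hba : b ≤ a) : AntitoneOn (fun t => φ t * (b - t) / t) (Set.Ioo 0 b) := by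
  intro s ⟨hs, hsb⟩ t ⟨ht, htb⟩ hst
  rw [div_le_div_iff₀ ht hs]
  set θ := s * (b - t) / (t * (b - s)) with hθ
  have hθ0 : 0 ≤ θ := div_nonneg (mul_nonneg hs.le (by linarith)) (by nlinarith)
  have hθ1 : θ ≤ 1 := (div_le_one (by nlinarith)).mpr (by nlinarith)
  have hweights : t * √θ ^ 2 * b + t * √(1 - θ) ^ 2 * s = s * b := by
    rw [Real.sq_sqrt hθ0, Real.sq_sqrt (sub_nonneg.mpr hθ1), hθ]
    field_simp
    ring
  let e : Fin 2 → EuclideanSpace ℝ (Fin 2) := fun i => EuclideanSpace.single i 1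
  let u := √θ • e 0 + √(1 - θ) • e 1
  have hnorm : ∀ x : EuclideanSpace ℝ (Fin 2), ‖x‖ ^ 2 = x 0 ^ 2 + x 1 ^ 2 := fun x => by
    simp [EuclideanSpace.real_norm_sq_eq, Fin.sum_univ_two]
  have he : ∀ i x, ⟪e i, x⟫ = x i := fun i x => by simp [e, EuclideanSpace.inner_single_left]
  have hu : ∀ x, ⟪u, x⟫ = √θ * x 0 + √(1 - θ) * x 1 := fun x => by
    simp only [u, inner_add_left, real_inner_smul_left, he]
  have hu1 : ‖u‖ = 1 := by
    rw [← pow_eq_one_iff_of_nonneg (norm_nonneg _) two_ne_zero, hnorm]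
    simp [u, e, Real.sq_sqrt hθ0, Real.sq_sqrt (sub_nonneg.mpr hθ1)]
  have hIcc : ∀ {r}, 0 ≤ r → r ≤ b → r ∈ Set.Icc 0 a := fun h0 h1 => ⟨h0, h1.trans hba⟩
  have hφle := hφ.inner_twoLevel_le hcont (isStarProjection_rankOne_self hu1)
    (isStarProjection_rankOne_self (x := e 0) (by simp [e])) (hIcc ht.le htb.le)
    (hIcc le_rfl (ht.trans htb).le) (hIcc hs.le hsb.le) (hIcc (ht.trans htb).le le_rfl)
    (fun x => by
      simp only [inner_twoLevel_apply_self, inner_rankOne_self_apply_self, hu, he, hnorm]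
      linarith [mul_add_mul_sq_le (x := x 0) (y := x 1) hs (ht.trans htb) ht.le hweights])
    (e 0)
  have hθs : φ t * θ ≤ φ s := by
    simp only [inner_twoLevel_apply_self, inner_rankOne_self_apply_self, hu, he, hnorm] at hφle
    simp [e, Real.sq_sqrt hθ0] at hφle
    nlinarith [mul_nonneg hφ0 (sub_nonneg.mpr hθ1)]
  calc φ t * (b - t) * s = φ t * θ * (t * (b - s)) := by rw [hθ]; field_simp
    _ ≤ φ s * (t * (b - s)) := mul_le_mul_of_nonneg_right hθs (by nlinarith)
    _ = φ s * (b - s) * t := by ring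

section Scalar

variable {a : ℝ} {φ : ℝ → ℝ}

theorem div_le_two_mul_div_of_le_half
    (hanti : AntitoneOn (fun t => φ t * (a - t) / t) (Set.Ioo 0 a)) {s t : ℝ} (hφt : 0 ≤ φ t) (hs : 0 < s) (hst : s ≤ t) (ht : t ≤ a / 2) :
    φ t / t ≤ 2 * (φ s / s) := by
  have ht0 : 0 < t := hs.trans_le hst
  have h := hanti ⟨hs, by linarith⟩ ⟨ht0, by linarith⟩ hst
  simp only [mul_div_right_comm _ (a - _)] at h
  nlinarith [div_nonneg hφt ht0.le]

theorem apply_half_div_le_div (hanti : AntitoneOn (fun t => φ t * (a - t) / t) (Set.Ioo 0 a))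
    (hmono : MonotoneOn φ (Set.Icc 0 a)) (hnn : ∀ t ∈ Set.Icc 0 a, 0 ≤ φ t) {s : ℝ} (hs : 0 < s)
    (hsa : s ≤ a) : φ (a / 2) / a ≤ φ s / s := by
  rcases le_or_gt s (a / 2) with hs2 | hs2
  · have := div_le_two_mul_div_of_le_half hanti (hnn _ ⟨by linarith, by linarith⟩) hs hs2 le_rfl
    rw [div_div_eq_mul_div, mul_div_right_comm, mul_comm] at this
    linarith
  · exact div_le_div₀ (hnn s ⟨hs.le, hsa⟩) (hmono ⟨by linarith, by linarith⟩ ⟨hs.le, hsa⟩ hs2.le)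
      hs hsa

theorem apply_nonpos_of_apply_half_eq_zero
    (hanti : AntitoneOn (fun t => φ t * (a - t) / t) (Set.Ioo 0 a)) (ha : 0 < a)
    (hcont : ContinuousWithinAt φ (Set.Ioo (a / 2) a) a) (h : φ (a / 2) = 0) : φ a ≤ 0 := by
  refine hcont.closure_le (g := fun _ => 0) ?_ continuousWithinAt_const fun t ht => ?_
  · rw [closure_Ioo (by linarith)]
    exact Set.right_mem_Icc.mpr (by linarith)
  · have hle := hanti ⟨half_pos ha, by linarith⟩ ⟨by linarith [ht.1], ht.2⟩ ht.1.le
    simp only [h, zero_mul, zero_div] at hle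
    rw [mul_div_assoc] at hle
    exact nonpos_of_mul_nonpos_left hle (div_pos (by linarith [ht.2]) (by linarith [ht.1]))

end Scalar

theorem operator_monotone_index_function_bound_general
    (a : ℝ) (ha : 0 < a) (φ : ℝ → ℝ)
    -- `φ` is an index function on `[0,a]` with values in `ℝ⁺`
    (hφcont : ContinuousOn φ (Set.Icc 0 a))
    (hφmono : MonotoneOn φ (Set.Icc 0 a))
    (hφnn : ∀ t ∈ Set.Icc (0 : ℝ) a, 0 ≤ φ t)
    -- `φ` is operator monotone: for any Hilbert space `H` and bounded non-negative
    -- self-adjoint operators `A ≼ B` of norm `≤ a`, one has `φ(A) ≼ φ(B)`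
    (hopmono : ∀ (H : Type) [NormedAddCommGroup H] [InnerProductSpace ℝ H]
      [CompleteSpace H] (A B ΦA ΦB : H →L[ℝ] H),
      A.IsPositive → B.IsPositive → ‖A‖ ≤ a → ‖B‖ ≤ a →
      IsFunctionalCalcOn a φ A ΦA → IsFunctionalCalcOn a φ B ΦB →
      (∀ x, ⟪A x, x⟫ ≤ ⟪B x, x⟫) → ∀ x, ⟪ΦA x, x⟫ ≤ ⟪ΦB x, x⟫) :
    ∃ C : ℝ, 1 ≤ C ∧ ∀ s t : ℝ, 0 < s → s ≤ t → t ≤ a → φ t / t ≤ C * (φ s / s) := by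
  have haI : a ∈ Set.Icc 0 a := ⟨ha.le, le_rfl⟩
  have hanti := IsOperatorMonotoneOn.antitoneOn_mul_sub_div hopmono hφcont
    (hφnn 0 ⟨le_rfl, ha.le⟩) le_rfl
  refine ⟨max 2 (2 * φ a / φ (a / 2)), le_max_of_le_left one_le_two, fun s t hs hst hta => ?_⟩
  have ht : 0 < t := hs.trans_le hst
  have htI : t ∈ Set.Icc 0 a := ⟨ht.le, hta⟩
  have hφs : 0 ≤ φ s / s := div_nonneg (hφnn s ⟨hs.le, hst.trans hta⟩) hs.le
  rcases le_or_gt t (a / 2) with hta2 | hta2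
  · calc φ t / t ≤ 2 * (φ s / s) := div_le_two_mul_div_of_le_half hanti (hφnn t htI) hs hst hta2
      _ ≤ _ := mul_le_mul_of_nonneg_right (le_max_left _ _) hφs
  have hφt : φ t / t ≤ φ a / (a / 2) :=
    div_le_div₀ (hφnn a haI) (hφmono htI haI hta) (half_pos ha) hta2.le
  rcases (hφnn (a / 2) ⟨by linarith, by linarith⟩).eq_or_lt with h0 | hpos
  · have hφa := apply_nonpos_of_apply_half_eq_zero hanti ha
      ((hφcont a haI).mono (Set.Ioo_subset_Icc_self.trans (Set.Icc_subset_Icc_left (by linarith))))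
      h0.symm
    calc φ t / t ≤ φ a / (a / 2) := hφt
      _ ≤ 0 := div_nonpos_of_nonpos_of_nonneg hφa (by linarith)
      _ ≤ _ := mul_nonneg (le_max_of_le_left zero_le_two) hφs
  calc φ t / t ≤ φ a / (a / 2) := hφt
    _ = 2 * φ a / φ (a / 2) * (φ (a / 2) / a) := by field_simp
    _ ≤ _ := mul_le_mul (le_max_right _ _)
      (apply_half_div_le_div hanti hφmono hφnn hs (hst.trans hta)) (div_nonneg hpos.le ha.le)
      (le_max_of_le_left zero_le_two)

/-- **Lemma 2.11 (Mathé–Pereverzyev).**  For each operator monotone index function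
`φ : [0,a] → ℝ⁺` there is a constant `1 ≤ C < ∞` such that whenever `0 < s ≤ t ≤ a` we
have `φ(t)/t ≤ C φ(s)/s`. -/
theorem operator_monotone_index_function_bound
    (a : ℝ) (ha : 0 < a) (φ : ℝ → ℝ)
    -- `φ` is an index function on `[0,a]` with values in `ℝ⁺`
    (hφcont : ContinuousOn φ (Set.Icc 0 a))
    (hφmono : MonotoneOn φ (Set.Icc 0 a))
    (hφ0 : φ 0 = 0)
    (hφnn : ∀ t ∈ Set.Icc (0 : ℝ) a, 0 ≤ φ t)
    -- `φ` is operator monotone: for any Hilbert space `H` and bounded non-negative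
    -- self-adjoint operators `A ≼ B` of norm `≤ a`, one has `φ(A) ≼ φ(B)`
    (hopmono : ∀ (H : Type) [NormedAddCommGroup H] [InnerProductSpace ℝ H]
      [CompleteSpace H] (A B ΦA ΦB : H →L[ℝ] H),
      A.IsPositive → B.IsPositive → ‖A‖ ≤ a → ‖B‖ ≤ a →
      IsFunctionalCalcOn a φ A ΦA → IsFunctionalCalcOn a φ B ΦB →
      (∀ x, ⟪A x, x⟫ ≤ ⟪B x, x⟫) → ∀ x, ⟪ΦA x, x⟫ ≤ ⟪ΦB x, x⟫) :
    ∃ C : ℝ, 1 ≤ C ∧ ∀ s t : ℝ, 0 < s → s ≤ t → t ≤ a → φ t / t ≤ C * (φ s / s) :=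
  operator_monotone_index_function_bound_general a ha φ hφcont hφmono hφnn hopmono
end
end

section
/- Let λ > 0, N ≥ 1, p ≥ 1, let (Y_i)_{i=1}^N and (c_{i,s})_{i,s=1}^N be real numbers, and suppose the real numbers b_0 and b_{k,i} (k = 1,…,p, i = 1,…,N) satisfy the linear system (λ+1)b_0 + (1/N) Σ_{i=1}^N Σ_{l=1}^p Σ_{s=1}^N b_{l,s} c_{i,s}^l = (1/N) Σ_{i=1}^N Y_i and λ b_{k,i} + (1/N) b_0 + (1/N) Σ_{l=1}^p Σ_{s=1}^N b_{l,s} c_{i,s}^l = (1/N) Y_i for all k = 1,…,p and i = 1,…,N. Then b_{k,i} = b_{1,i} for all k = 1,…,p and i = 1,…,N, and b_0 = Σ_{i=1}^N b_{1,i}. In particular, the coefficients of the Tikhonov-regularized polynomial functional regression estimator are completely determined by its linear part. -/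
noncomputable section

/-- **Reduction of the Tikhonov coefficient system (Section 3).**  Let `λ > 0`, `N ≥ 1`,
`p ≥ 1`, let `(Y_i)` and `(c_{i,s})` be real numbers, and suppose the reals `b₀` and
`b_{k,i}` (`k = 1,…,p`, `i = 1,…,N`) satisfy the linear system
`(λ+1)b₀ + (1/N) ∑_i ∑_{l=1}^p ∑_s b_{l,s} c_{i,s}^l = (1/N) ∑_i Y_i` and
`λ b_{k,i} + (1/N) b₀ + (1/N) ∑_{l=1}^p ∑_s b_{l,s} c_{i,s}^l = (1/N) Y_i` for all
`k = 1,…,p`, `i = 1,…,N`.  Then `b_{k,i} = b_{1,i}` for all `k, i`, and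
`b₀ = ∑_i b_{1,i}`; in particular, the coefficients of the Tikhonov-regularized
polynomial functional regression estimator are completely determined by its linear
part.  (Here `k, l` range over `Fin p`, with `k : Fin p` representing the index `k+1 ∈
{1,…,p}`, so `b k i` is `b_{k+1,i}` and the exponent of `c_{i,s}` is `l+1`.) -/
theorem tikhonov_coefficients_determined_by_linear_part
    (N p : ℕ) (hN : 1 ≤ N) (hp : 1 ≤ p)
    (lam : ℝ) (hlam : 0 < lam)
    (Y : Fin N → ℝ) (c : Fin N → Fin N → ℝ)
    (b0 : ℝ) (b : Fin p → Fin N → ℝ)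
    (h0 : (lam + 1) * b0 +
        (N : ℝ)⁻¹ * ∑ i, ∑ l : Fin p, ∑ s, b l s * c i s ^ ((l : ℕ) + 1) =
      (N : ℝ)⁻¹ * ∑ i, Y i)
    (hki : ∀ (k : Fin p) (i : Fin N),
      lam * b k i + (N : ℝ)⁻¹ * b0 +
          (N : ℝ)⁻¹ * ∑ l : Fin p, ∑ s, b l s * c i s ^ ((l : ℕ) + 1) =
        (N : ℝ)⁻¹ * Y i) :
    (∀ (k : Fin p) (i : Fin N), b k i = b ⟨0, hp⟩ i) ∧
    b0 = ∑ i, b ⟨0, hp⟩ i := by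
  have hNpos : (0:ℝ) < N := by exact_mod_cast Nat.lt_of_lt_of_le Nat.zero_lt_one hN
  have hkey : ∀ (k : Fin p) (i : Fin N), b k i = b ⟨0, hp⟩ i := by
    intro k i
    have h1 := hki k i
    have h2 := hki ⟨0, hp⟩ i
    have : lam * b k i = lam * b ⟨0, hp⟩ i := by linarith
    exact mul_left_cancel₀ (ne_of_gt hlam) this
  refine ⟨hkey, ?_⟩
  have hsum : lam * ∑ i, b ⟨0, hp⟩ i + b0 +
      (N : ℝ)⁻¹ * ∑ i, ∑ l : Fin p, ∑ s, b l s * c i s ^ ((l : ℕ) + 1) =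
      (N : ℝ)⁻¹ * ∑ i, Y i := by
    have : ∑ i : Fin N, (lam * b ⟨0, hp⟩ i + (N : ℝ)⁻¹ * b0 +
        (N : ℝ)⁻¹ * ∑ l : Fin p, ∑ s, b l s * c i s ^ ((l : ℕ) + 1)) =
        ∑ i : Fin N, (N : ℝ)⁻¹ * Y i :=
      Finset.sum_congr rfl (fun i _ => hki ⟨0, hp⟩ i)
    simp only [Finset.sum_add_distrib, ← Finset.mul_sum, Finset.sum_const,
      Finset.card_univ, Fintype.card_fin, nsmul_eq_mul] at this
    have hN1 : (N : ℝ) * ((N : ℝ)⁻¹ * b0) = b0 := by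
      field_simp
    linarith [this]
  have : lam * ∑ i, b ⟨0, hp⟩ i = lam * b0 := by linarith
  exact (mul_left_cancel₀ (ne_of_gt hlam) this).symm
end
end
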